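/- arXiv:1309.1967 — 3 statements merged into one kernel-verified Lean document; each statement's English description precedes it below -/
import Mathlib

section
/- Let X be a real-valued random variable with mean zero, variance one, and all moments finite satisfying the moment bounds E[|X|^k] ≤ m^{k/2}·k!! for all k ≥ 0 (as follows from a log-Sobolev inequality with coefficient m). Then there exists a constant c depending only on m such that for all t ∈ [-1,1], exp(t²/2 - c|t|³) ≤ E[exp(tX)] ≤ exp(t²/2 + c|t|³). -/
open MeasureTheory Real
open scoped Nat

/-!
For `|t| ≤ 1`, Taylor's formula gives `|e^{tx} - 1 - tx - t²x²/2| ≤ 6 |t|³ e^{2|x|}`, so with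
`E X = 0` and `E X² = 1` we get `|E e^{tX} - (1 + t²/2)| ≤ 6 |t|³ E e^{2|X|}`. Expanding `e^{2|X|}` in
its power series, the moment bounds together with `⌊k/2⌋! · k‼ ≤ k!` give
`E e^{2|X|} ≤ ∑ₖ (2√m)^k / ⌊k/2⌋! = (1 + 2√m) e^{4m}`, which depends on `m` only. The two bounds on
`E e^{tX}` then follow from `1 + u ≤ e^u`, from `e^u ≤ 1 + u + u²` for `0 < u ≤ 1`, and from
Jensen's inequality `E e^{tX} ≥ 1` where `t²/2 - c|t|³ ≤ 0`.
-/

theorem Real.hasSum_pow_div_factorial (x : ℝ) : HasSum (fun n : ℕ => x ^ n / n !) (exp x) := by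
  simpa [Real.exp_eq_exp_ℝ] using NormedSpace.expSeries_div_hasSum_exp x

theorem Real.abs_exp_sub_sum_le_abs_pow_mul_exp (x : ℝ) (n : ℕ) :
    |exp x - ∑ k ∈ Finset.range n, x ^ k / k !| ≤ |x| ^ n * exp |x| := by
  exact_mod_cast Complex.norm_exp_sub_sum_le_norm_mul_exp x n

theorem Real.abs_exp_sub_quadratic_le (x : ℝ) :
    |exp x - (1 + x + x ^ 2 / 2)| ≤ |x| ^ 3 * exp |x| := by
  simpa [Finset.sum_range_succ] using abs_exp_sub_sum_le_abs_pow_mul_exp x 3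

theorem abs_exp_mul_sub_quadratic_le {t : ℝ} (ht : |t| ≤ 1) (x : ℝ) :
    |exp (t * x) - (1 + t * x + t ^ 2 / 2 * x ^ 2)| ≤ 6 * |t| ^ 3 * exp (2 * |x|) := by
  have hcube : |x| ^ 3 ≤ 6 * exp |x| := by
    have := pow_div_factorial_le_exp |x| (abs_nonneg x) 3
    norm_num [Nat.factorial] at this
    linarith
  have htx : |t * x| ≤ |x| := by
    rw [abs_mul]; exact mul_le_of_le_one_left (abs_nonneg x) ht
  calc |exp (t * x) - (1 + t * x + t ^ 2 / 2 * x ^ 2)|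
      = |exp (t * x) - (1 + t * x + (t * x) ^ 2 / 2)| := by ring_nf
    _ ≤ |t * x| ^ 3 * exp |t * x| := abs_exp_sub_quadratic_le _
    _ ≤ |t| ^ 3 * |x| ^ 3 * exp |x| := by rw [← mul_pow, ← abs_mul]; gcongr
    _ ≤ |t| ^ 3 * (6 * exp |x|) * exp |x| := by gcongr
    _ = 6 * |t| ^ 3 * exp (2 * |x|) := by rw [two_mul, exp_add]; ring

theorem exp_sub_le_and_le_exp_add {t C E : ℝ} (ht : |t| ≤ 1) (hE : 1 ≤ E)
    (h : |E - (1 + t ^ 2 / 2)| ≤ C * |t| ^ 3) :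
    exp (t ^ 2 / 2 - (C + 1) * |t| ^ 3) ≤ E ∧ E ≤ exp (t ^ 2 / 2 + (C + 1) * |t| ^ 3) := by
  obtain ⟨hlow, hupp⟩ := abs_le.1 h
  have ht3 : 0 ≤ |t| ^ 3 := by positivity
  have ht4 : (t ^ 2) ^ 2 ≤ |t| ^ 3 := by
    rw [show (t ^ 2) ^ 2 = |t| ^ 4 by rw [← sq_abs t]; ring]
    exact pow_le_pow_of_le_one (abs_nonneg t) ht (by norm_num)
  constructor
  · set u := t ^ 2 / 2 - (C + 1) * |t| ^ 3 with hu_def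
    rcases le_or_gt u 0 with hu | hu
    · exact (exp_le_one_iff.2 hu).trans hE
    · have hut : u ≤ t ^ 2 / 2 := by nlinarith
      have hu1 : |u| ≤ 1 := by
        rw [abs_of_pos hu]; nlinarith [sq_abs t, abs_nonneg t]
      have hexp := (abs_le.1 (abs_exp_sub_one_sub_id_le hu1)).2
      nlinarith [pow_le_pow_left₀ hu.le hut 2]
  · nlinarith [add_one_le_exp (t ^ 2 / 2 + (C + 1) * |t| ^ 3)]

theorem Nat.factorial_div_two_mul_doubleFactorial_le : ∀ k : ℕ, (k / 2)! * k‼ ≤ k !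
  | 0 => le_rfl
  | 1 => le_rfl
  | k + 2 => by
    have ih := Nat.factorial_div_two_mul_doubleFactorial_le k
    rw [show (k + 2) / 2 = k / 2 + 1 by omega, Nat.doubleFactorial_add_two, Nat.factorial_succ,
      Nat.factorial_succ (k + 1), Nat.factorial_succ k]
    calc (k / 2 + 1) * (k / 2)! * ((k + 2) * k‼) = (k + 2) * (k / 2 + 1) * ((k / 2)! * k‼) := by
          ring
      _ ≤ (k + 2) * (k + 1) * k ! := by gcongr; omega
      _ = (k + 1 + 1) * ((k + 1) * k !) := by ring

theorem pow_div_factorial_mul_rpow_div_two_mul_doubleFactorial_le {s m : ℝ} (hs : 0 ≤ s)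
    (hm : 0 ≤ m) (k : ℕ) : s ^ k / k ! * (m ^ ((k : ℝ) / 2) * k‼) ≤ (s * √m) ^ k / (k / 2)! := by
  have hfac : ((k / 2)! : ℝ) * k‼ ≤ k ! := by
    exact_mod_cast Nat.factorial_div_two_mul_doubleFactorial_le k
  rw [rpow_div_two_eq_sqrt _ hm, rpow_natCast, mul_pow, div_mul_eq_mul_div,
    div_le_div_iff₀ (by positivity) (by positivity)]
  calc s ^ k * (√m ^ k * k‼) * (k / 2)! = s ^ k * √m ^ k * ((k / 2)! * k‼) := by ring
    _ ≤ s ^ k * √m ^ k * k ! := by gcongr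

theorem hasSum_pow_div_factorial_div_two (a : ℝ) :
    HasSum (fun k : ℕ => a ^ k / (k / 2)!) ((1 + a) * exp (a ^ 2)) := by
  have h := hasSum_pow_div_factorial (a ^ 2)
  rw [add_mul, one_mul]
  refine HasSum.even_add_odd ?_ ?_
  · simpa [← pow_mul] using h
  · refine (h.mul_left a).congr_fun fun j => ?_
    rw [show (2 * j + 1) / 2 = j by omega, pow_succ', pow_mul, mul_div_assoc]

section ExpMoment

variable {Ω : Type*} [MeasurableSpace Ω] {μ : Measure Ω} {X : Ω → ℝ} {s : ℝ}

theorem lintegral_ofReal_exp_mul_abs (hX : AEMeasurable X μ) (hs : 0 ≤ s)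
    (hInt : ∀ k : ℕ, Integrable (fun ω => |X ω| ^ k) μ) :
    ∫⁻ ω, ENNReal.ofReal (exp (s * |X ω|)) ∂μ
      = ∑' k : ℕ, ENNReal.ofReal (s ^ k / k ! * ∫ ω, |X ω| ^ k ∂μ) := by
  have hseries (ω : Ω) : HasSum (fun k : ℕ => s ^ k / k ! * |X ω| ^ k) (exp (s * |X ω|)) :=
    (hasSum_pow_div_factorial _).congr_fun fun k => by rw [mul_pow]; ring
  calc ∫⁻ ω, ENNReal.ofReal (exp (s * |X ω|)) ∂μ
      = ∫⁻ ω, ∑' k : ℕ, ENNReal.ofReal (s ^ k / k ! * |X ω| ^ k) ∂μ := by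
        congr with ω
        rw [← (hseries ω).tsum_eq, ENNReal.ofReal_tsum_of_nonneg (fun k => by positivity)
          (hseries ω).summable]
    _ = ∑' k : ℕ, ∫⁻ ω, ENNReal.ofReal (s ^ k / k ! * |X ω| ^ k) ∂μ :=
        lintegral_tsum fun k => ((hX.abs.pow_const k).const_mul _).ennreal_ofReal
    _ = ∑' k : ℕ, ENNReal.ofReal (s ^ k / k ! * ∫ ω, |X ω| ^ k ∂μ) := by
        congr with k
        rw [← integral_const_mul, ofReal_integral_eq_lintegral_ofReal ((hInt k).const_mul _)
          (ae_of_all _ fun ω => by positivity)]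

theorem integrable_exp_mul_abs_and_integral_le (hX : AEMeasurable X μ) (hs : 0 ≤ s)
    (hInt : ∀ k : ℕ, Integrable (fun ω => |X ω| ^ k) μ) {b : ℕ → ℝ} {B : ℝ}
    (hb : ∀ k : ℕ, s ^ k / k ! * ∫ ω, |X ω| ^ k ∂μ ≤ b k) (hB : HasSum b B) :
    Integrable (fun ω => exp (s * |X ω|)) μ ∧ ∫ ω, exp (s * |X ω|) ∂μ ≤ B := by
  have hb0 (k : ℕ) : 0 ≤ b k :=
    (mul_nonneg (by positivity) (integral_nonneg fun ω => by positivity)).trans (hb k)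
  have hlin : ∫⁻ ω, ENNReal.ofReal (exp (s * |X ω|)) ∂μ ≤ ENNReal.ofReal B := by
    rw [lintegral_ofReal_exp_mul_abs hX hs hInt, ← hB.tsum_eq,
      ENNReal.ofReal_tsum_of_nonneg hb0 hB.summable]
    exact ENNReal.tsum_le_tsum fun k => ENNReal.ofReal_le_ofReal (hb k)
  have hpos : 0 ≤ᵐ[μ] fun ω => exp (s * |X ω|) := ae_of_all _ fun ω => (exp_pos _).le
  have hmeas : AEStronglyMeasurable (fun ω => exp (s * |X ω|)) μ :=
    (hX.abs.const_mul s).exp.aestronglyMeasurable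
  refine ⟨⟨hmeas, (hasFiniteIntegral_iff_ofReal hpos).2 (hlin.trans_lt ENNReal.ofReal_lt_top)⟩, ?_⟩
  rw [integral_eq_lintegral_of_nonneg_ae hpos hmeas]
  exact ENNReal.toReal_le_of_le_ofReal (hB.nonneg hb0) hlin

end ExpMoment

section LaplaceTransform

variable {Ω : Type*} [MeasurableSpace Ω] {μ : Measure Ω} [IsProbabilityMeasure μ] {X : Ω → ℝ}

theorem one_le_integral_exp_mul (hX : Integrable X μ) (hmean : ∫ ω, X ω ∂μ = 0) (t : ℝ)
    (hexp : Integrable (fun ω => exp (t * X ω)) μ) : 1 ≤ ∫ ω, exp (t * X ω) ∂μ := by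
  have := convexOn_exp.map_integral_le continuous_exp.continuousOn isClosed_univ
    (ae_of_all _ fun ω => Set.mem_univ (t * X ω)) (hX.const_mul t) hexp
  simpa [integral_const_mul, hmean] using this

theorem abs_integral_exp_mul_sub_le (hX : Integrable X μ) (hX2 : Integrable (fun ω => X ω ^ 2) μ)
    (hmean : ∫ ω, X ω ∂μ = 0) (hvar : ∫ ω, X ω ^ 2 ∂μ = 1) {t : ℝ} (ht : |t| ≤ 1)
    (hexp : Integrable (fun ω => exp (t * X ω)) μ)
    (hexp2 : Integrable (fun ω => exp (2 * |X ω|)) μ) :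
    |∫ ω, exp (t * X ω) ∂μ - (1 + t ^ 2 / 2)| ≤ 6 * (∫ ω, exp (2 * |X ω|) ∂μ) * |t| ^ 3 := by
  have hlin : Integrable (fun ω => 1 + t * X ω) μ := (integrable_const 1).add (hX.const_mul t)
  have hquad : Integrable (fun ω => 1 + t * X ω + t ^ 2 / 2 * X ω ^ 2) μ :=
    hlin.add (hX2.const_mul _)
  have hquad_int : ∫ ω, (1 + t * X ω + t ^ 2 / 2 * X ω ^ 2) ∂μ = 1 + t ^ 2 / 2 := by
    rw [integral_add hlin (hX2.const_mul _), integral_add (integrable_const 1) (hX.const_mul t),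
      integral_const_mul, integral_const_mul, hmean, hvar]
    simp
  calc |∫ ω, exp (t * X ω) ∂μ - (1 + t ^ 2 / 2)|
      = |∫ ω, (exp (t * X ω) - (1 + t * X ω + t ^ 2 / 2 * X ω ^ 2)) ∂μ| := by
        rw [integral_sub hexp hquad, hquad_int]
    _ ≤ ∫ ω, |exp (t * X ω) - (1 + t * X ω + t ^ 2 / 2 * X ω ^ 2)| ∂μ :=
        abs_integral_le_integral_abs
    _ ≤ ∫ ω, 6 * |t| ^ 3 * exp (2 * |X ω|) ∂μ :=
        integral_mono (hexp.sub hquad).abs (hexp2.const_mul _)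
          fun ω => abs_exp_mul_sub_quadratic_le ht (X ω)
    _ = 6 * (∫ ω, exp (2 * |X ω|) ∂μ) * |t| ^ 3 := by rw [integral_const_mul]; ring

end LaplaceTransform

/-- Laplace transform bounds for a centered, unit-variance random
variable with double-factorial moment bounds. The constant `c` depends only on `m`. -/
theorem laplace_transform_bounds (m : ℝ) (hm : 0 < m) :
    ∃ c : ℝ, 0 < c ∧
      ∀ (Ω : Type) (_ : MeasureSpace Ω), IsProbabilityMeasure (volume : Measure Ω) →
      ∀ X : Ω → ℝ, Measurable X →
      (∀ k : ℕ, Integrable (fun ω => |X ω| ^ k)) →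
      (∫ ω, X ω) = 0 →
      (∫ ω, (X ω) ^ 2) = 1 →
      (∀ k : ℕ, (∫ ω, |X ω| ^ k) ≤ m ^ ((k : ℝ) / 2) * (Nat.doubleFactorial k : ℝ)) →
      (∀ t ∈ Set.Icc (-1 : ℝ) 1, Integrable (fun ω => Real.exp (t * X ω))) →
      ∀ t ∈ Set.Icc (-1 : ℝ) 1,
        Real.exp (t ^ 2 / 2 - c * |t| ^ 3) ≤ (∫ ω, Real.exp (t * X ω)) ∧
        (∫ ω, Real.exp (t * X ω)) ≤ Real.exp (t ^ 2 / 2 + c * |t| ^ 3) := by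
  set B := (1 + 2 * √m) * exp ((2 * √m) ^ 2)
  refine ⟨6 * B + 1, by positivity, ?_⟩
  intro Ω _ _ X hX hInt hmean hvar hMom hLap t ht
  have hX1 : Integrable X := (integrable_norm_iff hX.aestronglyMeasurable).1 (by simpa using hInt 1)
  have hX2 : Integrable (fun ω => X ω ^ 2) := (hInt 2).congr (ae_of_all _ fun ω => sq_abs (X ω))
  have ht' : |t| ≤ 1 := abs_le.2 ht
  obtain ⟨hexp2, hexp2_le⟩ := integrable_exp_mul_abs_and_integral_le hX.aemeasurable zero_le_two
    hInt (fun k => (mul_le_mul_of_nonneg_left (hMom k) (by positivity)).trans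
      (pow_div_factorial_mul_rpow_div_two_mul_doubleFactorial_le zero_le_two hm.le k))
    (hasSum_pow_div_factorial_div_two (2 * √m))
  refine exp_sub_le_and_le_exp_add ht' (one_le_integral_exp_mul hX1 hmean t (hLap t ht)) ?_
  calc |(∫ ω, exp (t * X ω)) - (1 + t ^ 2 / 2)|
      ≤ 6 * (∫ ω, exp (2 * |X ω|)) * |t| ^ 3 :=
        abs_integral_exp_mul_sub_le hX1 hX2 hmean hvar ht' (hLap t ht) hexp2
    _ ≤ 6 * B * |t| ^ 3 := by gcongr
end

section
/- Fix integers s₁,…,s_m ≥ 0 and polynomials q₁,…,q_m in one variable. Then the polynomial h(x,y) = ∑ over m-tuples of distinct indices (i₁,…,i_m) from {1,…,N} of ∏_{j=1}^m x_{i_j}^{s_j} q_j(y_{i_j}) can be written as a finite ℤ-linear combination of products of the form ∏_{j=1}^l (∑_{i=1}^N x_i^{t_j} q̃_j(y_i)) for suitable integers t_j and polynomials q̃_j. -/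
/-!
Write `g_j(i) = x_i^{s_j} q_j(y_i)`. Splitting off the first index of an injective tuple, its value
ranges over the complement of the others; summing it over all indices instead overcounts exactly the
collisions with one of the remaining `m` indices, and at a collision the two factors merge into a
single factor of the same shape, since these weights are closed under multiplication. So the sum
over `m + 1` distinct indices is a power sum times a sum over `m` distinct indices minus `m` sums
over `m` distinct indices, and induction puts it in the ring generated by the power sums
`∑_i g(i)`, which is the `ℤ`-span of their products.
-/

open Finset

theorem Function.Embedding.sum_compl_range {α ι M : Type*} [Fintype α] [Fintype ι]
    [DecidableEq ι] [AddCommGroup M] (e : α ↪ ι) (φ : ι → M) :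
    ∑ i : {i // i ∉ Set.range e}, φ i = ∑ i, φ i - ∑ a, φ (e a) := by
  classical
  rw [eq_sub_iff_add_eq, ← Fintype.sum_subtype_add_sum_subtype (· ∉ Set.range e) φ,
    add_right_inj]
  exact Fintype.sum_equiv ((Equiv.ofInjective e e.injective).trans
    (Equiv.subtypeEquivRight fun _ => not_not.symm)) _ _ fun _ => rfl

theorem prod_update_mul_apply {α β M : Type*} [Fintype α] [DecidableEq α] [CommMonoid M]
    (g : α → β → M) (φ : β → M) (k : α) (e : α → β) :
    ∏ j, Function.update g k (g k * φ) j (e j) = (∏ j, g j (e j)) * φ (e k) := by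
  have hcompl :
      ∏ j ∈ {k}ᶜ, Function.update g k (g k * φ) j (e j) = ∏ j ∈ {k}ᶜ, g j (e j) :=
    prod_congr rfl fun j hj => by rw [Function.update_of_ne (by simpa using hj)]
  rw [Fintype.prod_eq_mul_prod_compl k, Fintype.prod_eq_mul_prod_compl k, hcompl,
    Function.update_self, Pi.mul_apply, mul_right_comm]

section DistinctSum

variable {ι R : Type*} [Fintype ι] [CommRing R]

noncomputable def distinctSum {m : ℕ} (g : Fin m → ι → R) : R :=
  ∑ e : Fin m ↪ ι, ∏ j, g j (e j)

@[simp]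
theorem distinctSum_zero (g : Fin 0 → ι → R) : distinctSum g = 1 := by
  simp [distinctSum]

theorem distinctSum_succ {m : ℕ} (g : Fin (m + 1) → ι → R) :
    distinctSum g = (∑ i, g 0 i) * distinctSum (Fin.tail g)
      - ∑ k, distinctSum (Function.update (Fin.tail g) k (Fin.tail g k * g 0)) := by
  classical
  unfold distinctSum
  rw [← (Equiv.embeddingFinSucc m ι).symm.sum_comp, Fintype.sum_sigma, mul_sum, sum_comm]
  simp only [prod_update_mul_apply, ← sum_sub_distrib]
  refine sum_congr rfl fun e _ => ?_
  simp only [Equiv.coe_embeddingFinSucc_symm, Fin.prod_univ_succ, Fin.cons_zero, Fin.cons_succ]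
  rw [← sum_mul, e.sum_compl_range (g 0), ← mul_sum]
  simp only [Fin.tail]
  ring

theorem distinctSum_mem_adjoin (F : Subsemigroup (ι → R)) {m : ℕ} (g : Fin m → ι → R)
    (hg : ∀ j, g j ∈ F) :
    distinctSum g ∈ Algebra.adjoin ℤ ((fun φ : ι → R => ∑ i, φ i) '' F) := by
  induction m with
  | zero => simp
  | succ m ih =>
    rw [distinctSum_succ]
    refine sub_mem (mul_mem (Algebra.subset_adjoin ⟨g 0, hg 0, rfl⟩) (ih _ fun j => hg j.succ))
      (sum_mem fun k _ => ih _ ?_)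
    exact (Function.forall_update_iff _ fun _ φ => φ ∈ F).2
      ⟨F.mul_mem (hg k.succ) (hg 0), fun j _ => hg j.succ⟩

end DistinctSum

section MonomialWeights

open MvPolynomial

variable (ι K : Type*) [CommRing K]

def monomialWeights : Subsemigroup (ι → MvPolynomial (ι ⊕ ι) K) where
  carrier := {φ | ∃ (t : ℕ) (q : Polynomial K),
    φ = fun i => X (.inl i) ^ t * Polynomial.aeval (X (.inr i)) q}
  mul_mem' := by
    rintro _ _ ⟨t, q, rfl⟩ ⟨t', q', rfl⟩
    exact ⟨t + t', q * q', funext fun i => by simp only [Pi.mul_apply, pow_add, map_mul]; ring⟩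

variable [Fintype ι]

def powerSumProducts : Submonoid (MvPolynomial (ι ⊕ ι) K) where
  carrier := {p | ∃ (l : ℕ) (t : Fin l → ℕ) (qt : Fin l → Polynomial K),
    p = ∏ j : Fin l, ∑ i : ι, X (.inl i) ^ (t j) * Polynomial.aeval (X (.inr i)) (qt j)}
  mul_mem' := by
    rintro _ _ ⟨l, t, q, rfl⟩ ⟨l', t', q', rfl⟩
    exact ⟨l + l', Fin.append t t', Fin.append q q', by simp [Fin.prod_univ_add]⟩
  one_mem' := ⟨0, ![], ![], by simp⟩

theorem closure_sum_monomialWeights_le :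
    Submonoid.closure
        ((fun φ : ι → MvPolynomial (ι ⊕ ι) K => ∑ i, φ i) '' monomialWeights ι K) ≤
      powerSumProducts ι K :=
  Submonoid.closure_le.2 <| by
    rintro _ ⟨φ, ⟨t, q, rfl⟩, rfl⟩
    exact ⟨1, ![t], ![q], by simp⟩

end MonomialWeights

/-- the sum over tuples of distinct indices of products
`∏_j x_{i_j}^{s_j} q_j(y_{i_j})` lies in the ℤ-span of products of power-sum type
expressions `∏_j (∑_i x_i^{t_j} q̃_j(y_i))`. Variables are indexed by
`Fin N ⊕ Fin N`: `inl i` is `x_i` and `inr i` is `y_i`. -/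
theorem distinct_sum_in_span_of_power_sums (N m : ℕ)
    (s : Fin m → ℕ) (q : Fin m → Polynomial ℝ) :
    (∑ f : Fin m ↪ Fin N, ∏ j : Fin m,
        (MvPolynomial.X (Sum.inl (f j)) : MvPolynomial (Fin N ⊕ Fin N) ℝ) ^ (s j) *
          Polynomial.aeval (MvPolynomial.X (Sum.inr (f j))) (q j))
      ∈ Submodule.span ℤ
        {p : MvPolynomial (Fin N ⊕ Fin N) ℝ |
          ∃ (l : ℕ) (t : Fin l → ℕ) (qt : Fin l → Polynomial ℝ),
            p = ∏ j : Fin l, ∑ i : Fin N,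
              (MvPolynomial.X (Sum.inl i)) ^ (t j) *
                Polynomial.aeval (MvPolynomial.X (Sum.inr i)) (qt j)} := by
  have h := distinctSum_mem_adjoin (monomialWeights (Fin N) ℝ)
    (fun j i => MvPolynomial.X (Sum.inl i) ^ s j *
      Polynomial.aeval (MvPolynomial.X (Sum.inr i)) (q j))
    fun j => ⟨s j, q j, rfl⟩
  rw [← Subalgebra.mem_toSubmodule, Algebra.adjoin_eq_span] at h
  exact Submodule.span_mono (closure_sum_monomialWeights_le (Fin N) ℝ) h
end

section
/- With B an N×N real symmetric matrix with eigenvalues λ_i, θ ∈ ℝ∖{0} small, v = R_B(2θ), one has the identity θv - (1/(2N))∑_{i=1}^N log(1 - 2θλ_i + 2θv) = (1/2)∫_0^{2θ} R_B(s) ds, where R_B is the R-transform of the empirical spectral distribution of B. -/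
/-!
With `z(s) = v(s) + 1/s`, the defining relation of `v` reads `H(z(s)) = s` for `s ≠ 0`, where
`H(z) = (1/N) ∑ 1/(z - λ_i)` is the Cauchy transform of the spectrum. Since `H' < 0` off the
spectrum, the continuous local inverse `z` of `H`, hence `v`, is differentiable for `s ≠ 0`.
Put `g_i(s) = 1 - s λ_i + s v(s)` and `F(s) = s v(s) - (1/N) ∑ log g_i(s)`. In `F'` the terms
containing `v'` cancel because `(1/N) ∑ 1/g_i = 1`, and so does `(1/N) ∑ (v - λ_i)/g_i`, which
equals `(1/s) (1 - (1/N) ∑ 1/g_i)`. Hence `F' = v`, `F(0) = 0`, and the identity is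
`F(2θ) = ∫_0^{2θ} v` halved.
-/

open Finset intervalIntegral Filter Topology

section

variable {ι : Type*} [Fintype ι] (lam : ι → ℝ)

noncomputable def cauchyTransform (z : ℝ) : ℝ :=
  (Fintype.card ι : ℝ)⁻¹ * ∑ i, (z - lam i)⁻¹

noncomputable def rTransformPrimitive (v : ℝ → ℝ) (s : ℝ) : ℝ :=
  s * v s - (Fintype.card ι : ℝ)⁻¹ * ∑ i, Real.log (1 - s * lam i + s * v s)

variable {lam}

theorem cauchyTransform_add_inv (w : ℝ) {s : ℝ} (hs : s ≠ 0) :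
    cauchyTransform lam (w + s⁻¹) =
      s * ((Fintype.card ι : ℝ)⁻¹ * ∑ i, (1 - s * lam i + s * w)⁻¹) := by
  have hterm : ∀ i, (w + s⁻¹ - lam i)⁻¹ = s * (1 - s * lam i + s * w)⁻¹ := fun i => by
    rw [show w + s⁻¹ - lam i = s⁻¹ * (1 - s * lam i + s * w) by field_simp; ring,
      mul_inv, inv_inv]
  simp only [cauchyTransform, hterm, ← Finset.mul_sum]
  ring

theorem hasDerivAt_cauchyTransform {z : ℝ} (hz : ∀ i, z ≠ lam i) :
    HasDerivAt (cauchyTransform lam)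
      (-((Fintype.card ι : ℝ)⁻¹ * ∑ i, ((z - lam i) ^ 2)⁻¹)) z := by
  have hterm : ∀ i, HasDerivAt (fun z => (z - lam i)⁻¹) (-((z - lam i) ^ 2)⁻¹) z := fun i =>
    (((hasDerivAt_id' z).sub_const (lam i)).inv (sub_ne_zero.mpr (hz i))).congr_deriv (by ring)
  rw [← mul_neg, ← Finset.sum_neg_distrib]
  exact (HasDerivAt.fun_sum fun i _ => hterm i).const_mul _

theorem hasDerivAt_local_inverse_cauchyTransform [Nonempty ι] {z : ℝ → ℝ} {s₀ : ℝ}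
    (hcont : ContinuousAt z s₀) (hz : ∀ i, z s₀ ≠ lam i)
    (heq : ∀ᶠ s in 𝓝 s₀, cauchyTransform lam (z s) = s) :
    HasDerivAt z (-((Fintype.card ι : ℝ)⁻¹ * ∑ i, ((z s₀ - lam i) ^ 2)⁻¹))⁻¹ s₀ := by
  refine .of_local_left_inverse hcont (hasDerivAt_cauchyTransform hz) ?_ heq
  have hpos : 0 < ∑ i, ((z s₀ - lam i) ^ 2)⁻¹ :=
    Finset.sum_pos (fun i _ => by have := sub_ne_zero.mpr (hz i); positivity) univ_nonempty
  have : (0 : ℝ) < Fintype.card ι := by exact_mod_cast Fintype.card_pos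
  exact neg_ne_zero.mpr (by positivity)

theorem hasDerivAt_rTransformPrimitive {v : ℝ → ℝ} {x d : ℝ} (hx : x ≠ 0)
    (hv : HasDerivAt v d x) (hg : ∀ i, 1 - x * lam i + x * v x ≠ 0)
    (hmean : (Fintype.card ι : ℝ)⁻¹ * ∑ i, (1 - x * lam i + x * v x)⁻¹ = 1) :
    HasDerivAt (rTransformPrimitive lam v) (v x) x := by
  set g : ι → ℝ := fun i => 1 - x * lam i + x * v x
  set n : ℝ := (Fintype.card ι : ℝ)
  have hn : n ≠ 0 := by rintro hn; simp [hn] at hmean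
  have hg' : ∀ i, HasDerivAt (fun s => 1 - s * lam i + s * v s) (v x + x * d - lam i) x :=
    fun i => (((hasDerivAt_id' x).mul_const (lam i)).const_sub 1 |>.add
        ((hasDerivAt_id' x).mul hv)).congr_deriv (by ring)
  have hderiv : HasDerivAt (rTransformPrimitive lam v)
      (1 * v x + x * d - n⁻¹ * ∑ i, (v x + x * d - lam i) / g i) x :=
    ((hasDerivAt_id' x).mul hv).sub
      ((HasDerivAt.fun_sum (u := univ) fun i _ => (hg' i).log (hg i)).const_mul n⁻¹)
  have hlog : n⁻¹ * ∑ i, (v x + x * d - lam i) / g i = x * d := by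
    have hterm : ∀ i, (v x + x * d - lam i) / g i = x⁻¹ + (x * d - x⁻¹) * (g i)⁻¹ := fun i => by
      rw [div_eq_iff (hg i), add_mul, mul_assoc, inv_mul_cancel₀ (hg i)]
      field_simp
      ring
    simp only [hterm, Finset.sum_add_distrib, ← Finset.mul_sum, sum_const, card_univ,
      nsmul_eq_mul]
    linear_combination (x * d - x⁻¹) * hmean + x⁻¹ * mul_inv_cancel₀ hn
  convert hderiv using 1
  rw [hlog]
  ring

theorem ContinuousOn.rTransformPrimitive {v : ℝ → ℝ} {S : Set ℝ} (hv : ContinuousOn v S)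
    (hg : ∀ s ∈ S, ∀ i, 1 - s * lam i + s * v s ≠ 0) :
    ContinuousOn (rTransformPrimitive lam v) S :=
  (continuousOn_id.mul hv).sub (continuousOn_const.mul (continuousOn_finsetSum _ fun i _ =>
    ((continuousOn_const.sub (continuousOn_id.mul continuousOn_const)).add
      (continuousOn_id.mul hv)).log fun s hs => hg s hs i))

@[simp]
theorem rTransformPrimitive_zero (v : ℝ → ℝ) : rTransformPrimitive lam v 0 = 0 := by
  simp [rTransformPrimitive]

end

theorem r_transform_primitive_identity_general (N : ℕ) (hN : 0 < N) (lam : Fin N → ℝ)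
    (θ : ℝ) (v : ℝ → ℝ)
    (hv_cont : ContinuousOn v (Set.uIcc 0 (2 * θ)))
    (hpos : ∀ s ∈ Set.uIcc (0 : ℝ) (2 * θ), ∀ i, 0 < 1 - s * lam i + s * v s)
    (hv : ∀ s ∈ Set.uIcc (0 : ℝ) (2 * θ), s ≠ 0 →
      (1 / (N : ℝ)) * ∑ i, 1 / (1 - s * lam i + s * v s) = 1) :
    θ * v (2 * θ)
        - (1 / (2 * (N : ℝ))) * ∑ i, Real.log (1 - 2 * θ * lam i + 2 * θ * v (2 * θ))
      = (1 / 2) * ∫ s in (0 : ℝ)..(2 * θ), v s := by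
  have : Nonempty (Fin N) := Fin.pos_iff_nonempty.mp hN
  have hmean : ∀ s ∈ Set.uIcc (0 : ℝ) (2 * θ), s ≠ 0 →
      (Fintype.card (Fin N) : ℝ)⁻¹ * ∑ i, (1 - s * lam i + s * v s)⁻¹ = 1 := fun s hs hs0 => by
    simpa only [Fintype.card_fin, one_div] using hv s hs hs0
  have hderiv : ∀ x ∈ Set.Ioo (min 0 (2 * θ)) (max 0 (2 * θ)),
      HasDerivAt (rTransformPrimitive lam v) (v x) x := by
    intro x hx
    have hxI : x ∈ Set.uIcc 0 (2 * θ) := Set.Ioo_subset_Icc_self hx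
    have hx0 : x ≠ 0 := by rintro rfl; grind
    have hinv : ∀ᶠ s in 𝓝 x, cauchyTransform lam (v s + s⁻¹) = s := by
      filter_upwards [isOpen_Ioo.mem_nhds hx] with s hs
      have hs0 : s ≠ 0 := by rintro rfl; grind
      rw [cauchyTransform_add_inv _ hs0, hmean s (Set.Ioo_subset_Icc_self hs) hs0, mul_one]
    have hz := hasDerivAt_local_inverse_cauchyTransform
      ((hv_cont.continuousAt (Icc_mem_nhds hx.1 hx.2)).add (continuousAt_inv₀ hx0))
      (fun i h => (hpos x hxI i).ne' (by rw [← h, Pi.add_apply]; field_simp; ring)) hinv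
    exact hasDerivAt_rTransformPrimitive hx0 (by simpa using hz.sub (hasDerivAt_inv hx0))
      (fun i => (hpos x hxI i).ne') (hmean x hxI hx0)
  have hFTC := integral_eq_sub_of_hasDeriv_right
    (hv_cont.rTransformPrimitive fun s hs i => (hpos s hs i).ne')
    (fun x hx => (hderiv x hx).hasDerivWithinAt) hv_cont.intervalIntegrable
  rw [hFTC, rTransformPrimitive_zero, rTransformPrimitive, Fintype.card_fin]
  ring

/-- with `v(s) = R_B(s)` (characterized by
`(1/N) ∑ 1/(1 - s λ_i + s v(s)) = 1` for `s ≠ 0`), one has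
`θ v(2θ) - (1/(2N)) ∑ log(1 - 2θλ_i + 2θ v(2θ)) = (1/2) ∫_0^{2θ} R_B(s) ds`. -/
theorem r_transform_primitive_identity (N : ℕ) (hN : 0 < N) (lam : Fin N → ℝ)
    (θ : ℝ) (hθ : θ ≠ 0) (v : ℝ → ℝ)
    (hv_cont : ContinuousOn v (Set.uIcc 0 (2 * θ)))
    (hpos : ∀ s ∈ Set.uIcc (0 : ℝ) (2 * θ), ∀ i, 0 < 1 - s * lam i + s * v s)
    (hv : ∀ s ∈ Set.uIcc (0 : ℝ) (2 * θ), s ≠ 0 →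
      (1 / (N : ℝ)) * ∑ i, 1 / (1 - s * lam i + s * v s) = 1) :
    θ * v (2 * θ)
        - (1 / (2 * (N : ℝ))) * ∑ i, Real.log (1 - 2 * θ * lam i + 2 * θ * v (2 * θ))
      = (1 / 2) * ∫ s in (0 : ℝ)..(2 * θ), v s :=
  r_transform_primitive_identity_general N hN lam θ v hv_cont hpos hv
end
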